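/- Let C be a clause derivable by resolution from the existential parts of the clauses of KBKF-lq[n], where the derivation uses at least one A-clause. Then the set I of indices i ∈ [0,n] such that some clause from {A_0} (for i = 0) or {A^d_i, A^e_i} (for i ≥ 1) appears as a leaf of the derivation is a nonempty interval [a,b] of integers. -/
import Mathlib


/-- The existential variables of KBKF-lq[n]. -/
inductive EVar : Type
  | d (i : ℕ) | e (i : ℕ) | f (i : ℕ)
deriving DecidableEq

/-- A clause: a finite set of literals `(v, b)`, `b = true` being positive. -/
abbrev EClause := Finset (EVar × Bool)

/-- The resolvent of C and D on pivot v: (C \ {v}) ∪ (D \ {¬v}). -/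
def resolventOn (C D : EClause) (v : EVar) : EClause :=
  (C.erase (v, true)) ∪ (D.erase (v, false))

/-- Resolution derivations from an axiom set, recording the set of axioms
used as leaves of the derivation. -/
inductive ResDeriv (Ax : Set EClause) : EClause → Set EClause → Prop
  | ax {C : EClause} : C ∈ Ax → ResDeriv Ax C {C}
  | res {C D : EClause} {U V : Set EClause} {v : EVar} :
      ResDeriv Ax C U → ResDeriv Ax D V → (v, true) ∈ C → (v, false) ∈ D →
      ResDeriv Ax (resolventOn C D v) (U ∪ V)

/-- The negative literals ¬f_a, …, ¬f_n. -/
def negFs (a n : ℕ) : EClause :=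
  (Finset.Icc a n).image (fun j => (EVar.f j, false))

/-- The existential part of A₀. -/
def exA0 (n : ℕ) : EClause :=
  insert (EVar.d 1, false) (insert (EVar.e 1, false) (negFs 1 n))

/-- The existential part of A^d_i. -/
def exAd (n i : ℕ) : EClause :=
  insert (EVar.d i, true)
    ((if i < n then {(EVar.d (i + 1), false), (EVar.e (i + 1), false)} else ∅) ∪
      negFs 1 n)

/-- The existential part of A^e_i. -/
def exAe (n i : ℕ) : EClause :=
  insert (EVar.e i, true)
    ((if i < n then {(EVar.d (i + 1), false), (EVar.e (i + 1), false)} else ∅) ∪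
      negFs 1 n)

/-- The existential part of B⁰_i and B¹_i: {f_i, ¬f_{i+1}, …, ¬f_n}. -/
def exB (n i : ℕ) : EClause :=
  insert (EVar.f i, true) (negFs (i + 1) n)

/-- The existential parts of all clauses of KBKF-lq[n]. -/
def exAxioms (n : ℕ) : Set EClause :=
  {exA0 n} ∪ { C | ∃ i, 1 ≤ i ∧ i ≤ n ∧ (C = exAd n i ∨ C = exAe n i) } ∪
    { C | ∃ i, 1 ≤ i ∧ i ≤ n ∧ C = exB n i }

/-- The indices in [0,n] of A-clauses used as leaves of a derivation whose
used-axiom set is U. -/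
def usedAIndices (n : ℕ) (U : Set EClause) : Set ℕ :=
  { i | (i = 0 ∧ exA0 n ∈ U) ∨
        (1 ≤ i ∧ i ≤ n ∧ (exAd n i ∈ U ∨ exAe n i ∈ U)) }

-- auxiliary lemmas

lemma mem_negFs {a n : ℕ} {l : EVar × Bool} :
    l ∈ negFs a n ↔ ∃ j, a ≤ j ∧ j ≤ n ∧ l = (EVar.f j, false) := by
  simp only [negFs, Finset.mem_image, Finset.mem_Icc]
  constructor
  · rintro ⟨j, ⟨h1, h2⟩, rfl⟩; exact ⟨j, h1, h2, rfl⟩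
  · rintro ⟨j, h1, h2, rfl⟩; exact ⟨j, ⟨h1, h2⟩, rfl⟩

lemma mem_exA0 {n : ℕ} {l : EVar × Bool} :
    l ∈ exA0 n ↔ l = (EVar.d 1, false) ∨ l = (EVar.e 1, false) ∨
      ∃ j, 1 ≤ j ∧ j ≤ n ∧ l = (EVar.f j, false) := by
  simp [exA0, mem_negFs]

lemma mem_exAd {n i : ℕ} {l : EVar × Bool} :
    l ∈ exAd n i ↔ l = (EVar.d i, true) ∨
      (i < n ∧ (l = (EVar.d (i+1), false) ∨ l = (EVar.e (i+1), false))) ∨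
      ∃ j, 1 ≤ j ∧ j ≤ n ∧ l = (EVar.f j, false) := by
  by_cases h : i < n <;> simp [exAd, h, mem_negFs] <;> tauto

lemma mem_exAe {n i : ℕ} {l : EVar × Bool} :
    l ∈ exAe n i ↔ l = (EVar.e i, true) ∨
      (i < n ∧ (l = (EVar.d (i+1), false) ∨ l = (EVar.e (i+1), false))) ∨
      ∃ j, 1 ≤ j ∧ j ≤ n ∧ l = (EVar.f j, false) := by
  by_cases h : i < n <;> simp [exAe, h, mem_negFs] <;> tauto

lemma mem_exB {n i : ℕ} {l : EVar × Bool} :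
    l ∈ exB n i ↔ l = (EVar.f i, true) ∨
      ∃ j, i + 1 ≤ j ∧ j ≤ n ∧ l = (EVar.f j, false) := by
  simp [exB, mem_negFs]

lemma usedA_union (n : ℕ) (U V : Set EClause) :
    usedAIndices n (U ∪ V) = usedAIndices n U ∪ usedAIndices n V := by
  ext i; simp only [usedAIndices, Set.mem_setOf_eq, Set.mem_union]; tauto

lemma usedA_A0 (n : ℕ) : usedAIndices n {exA0 n} = Set.Icc 0 0 := by
  ext i
  simp only [usedAIndices, Set.mem_setOf_eq, Set.mem_singleton_iff, Set.mem_Icc]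
  constructor
  · rintro (⟨rfl, -⟩ | ⟨h1, h2, h | h⟩)
    · omega
    · exfalso
      have : (EVar.d i, true) ∈ exA0 n := by rw [← h]; exact mem_exAd.2 (Or.inl rfl)
      simp [mem_exA0] at this
    · exfalso
      have : (EVar.e i, true) ∈ exA0 n := by rw [← h]; exact mem_exAe.2 (Or.inl rfl)
      simp [mem_exA0] at this
  · rintro ⟨-, h⟩; interval_cases i; tauto

lemma usedA_Ad (n i₀ : ℕ) (h1 : 1 ≤ i₀) (h2 : i₀ ≤ n) :
    usedAIndices n {exAd n i₀} = Set.Icc i₀ i₀ := by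
  ext i
  simp only [usedAIndices, Set.mem_setOf_eq, Set.mem_singleton_iff, Set.mem_Icc]
  constructor
  · rintro (⟨rfl, h⟩ | ⟨ha, hb, h | h⟩)
    · exfalso
      have : (EVar.d i₀, true) ∈ exA0 n := by rw [h]; exact mem_exAd.2 (Or.inl rfl)
      simp [mem_exA0] at this
    · have : (EVar.d i, true) ∈ exAd n i₀ := by rw [← h]; exact mem_exAd.2 (Or.inl rfl)
      rw [mem_exAd] at this
      rcases this with h' | ⟨-, h' | h'⟩ | ⟨j, -, -, h'⟩ <;> simp_all <;> omega
    · exfalso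
      have : (EVar.e i, true) ∈ exAd n i₀ := by rw [← h]; exact mem_exAe.2 (Or.inl rfl)
      rw [mem_exAd] at this
      rcases this with h' | ⟨-, h' | h'⟩ | ⟨j, -, -, h'⟩ <;> simp_all
  · rintro ⟨ha, hb⟩
    have : i = i₀ := le_antisymm hb ha
    subst this
    exact Or.inr ⟨h1, h2, Or.inl rfl⟩

lemma usedA_Ae (n i₀ : ℕ) (h1 : 1 ≤ i₀) (h2 : i₀ ≤ n) :
    usedAIndices n {exAe n i₀} = Set.Icc i₀ i₀ := by
  ext i
  simp only [usedAIndices, Set.mem_setOf_eq, Set.mem_singleton_iff, Set.mem_Icc]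
  constructor
  · rintro (⟨rfl, h⟩ | ⟨ha, hb, h | h⟩)
    · exfalso
      have : (EVar.e i₀, true) ∈ exA0 n := by rw [h]; exact mem_exAe.2 (Or.inl rfl)
      simp [mem_exA0] at this
    · exfalso
      have : (EVar.d i, true) ∈ exAe n i₀ := by rw [← h]; exact mem_exAd.2 (Or.inl rfl)
      rw [mem_exAe] at this
      rcases this with h' | ⟨-, h' | h'⟩ | ⟨j, -, -, h'⟩ <;> simp_all
    · have : (EVar.e i, true) ∈ exAe n i₀ := by rw [← h]; exact mem_exAe.2 (Or.inl rfl)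
      rw [mem_exAe] at this
      rcases this with h' | ⟨-, h' | h'⟩ | ⟨j, -, -, h'⟩ <;> simp_all <;> omega
  · rintro ⟨ha, hb⟩
    have : i = i₀ := le_antisymm hb ha
    subst this
    exact Or.inr ⟨h1, h2, Or.inr rfl⟩

lemma usedA_B (n i₀ : ℕ) : usedAIndices n {exB n i₀} = ∅ := by
  ext i
  simp only [usedAIndices, Set.mem_setOf_eq, Set.mem_singleton_iff, Set.mem_empty_iff_false,
    iff_false]
  rintro (⟨rfl, h⟩ | ⟨ha, hb, h | h⟩)
  · have : (EVar.f i₀, true) ∈ exA0 n := by rw [h]; exact mem_exB.2 (Or.inl rfl)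
    simp [mem_exA0] at this
  · have : (EVar.d i, true) ∈ exB n i₀ := by rw [← h]; exact mem_exAd.2 (Or.inl rfl)
    rw [mem_exB] at this
    rcases this with h' | ⟨j, -, -, h'⟩ <;> simp_all
  · have : (EVar.e i, true) ∈ exB n i₀ := by rw [← h]; exact mem_exAe.2 (Or.inl rfl)
    rw [mem_exB] at this
    rcases this with h' | ⟨j, -, -, h'⟩ <;> simp_all

/-- only f-literals, at most one positive -/
def OnlyF (C : EClause) : Prop :=
  (∀ l ∈ C, ∃ j, (l : EVar × Bool).1 = EVar.f j) ∧
  ∀ j k, (EVar.f j, true) ∈ C → (EVar.f k, true) ∈ C → j = k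

def Chain (a b : ℕ) (C : EClause) : Prop :=
  (∀ j, ((EVar.d j, true) ∈ C ∨ (EVar.e j, true) ∈ C) → a ≤ j ∧ j ≤ b) ∧
  (∀ j, ((EVar.d j, false) ∈ C ∨ (EVar.e j, false) ∈ C) → a + 1 ≤ j ∧ j ≤ b + 1) ∧
  (∀ j, (EVar.f j, true) ∉ C)

lemma mem_resolvent {C D : EClause} {v : EVar} {l : EVar × Bool} :
    l ∈ resolventOn C D v ↔ (l ∈ C ∧ l ≠ (v, true)) ∨ (l ∈ D ∧ l ≠ (v, false)) := by
  simp [resolventOn, Finset.mem_union, Finset.mem_erase, and_comm]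

lemma main_invariant (n : ℕ) (C : EClause) (U : Set EClause)
    (hder : ResDeriv (exAxioms n) C U) :
    (usedAIndices n U = ∅ ∧ OnlyF C) ∨
    (∃ a b, a ≤ b ∧ b ≤ n ∧ usedAIndices n U = Set.Icc a b ∧ Chain a b C) := by
  induction hder with
  | ax h =>
    rename_i X
    rcases h with (h | ⟨i, h1, h2, rfl | rfl⟩) | ⟨i, h1, h2, rfl⟩
    · rw [Set.mem_singleton_iff] at h; subst h
      refine Or.inr ⟨0, 0, le_refl 0, Nat.zero_le n, usedA_A0 n, ?_, ?_, ?_⟩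
      · intro j hj
        exfalso; rcases hj with hj | hj <;> simp [mem_exA0] at hj
      · intro j hj
        rcases hj with hj | hj <;> rw [mem_exA0] at hj <;>
          rcases hj with h' | h' | ⟨k, -, -, h'⟩ <;> simp_all
      · intro j hj; simp [mem_exA0] at hj
    · refine Or.inr ⟨i, i, le_refl i, h2, usedA_Ad n i h1 h2, ?_, ?_, ?_⟩
      · intro j hj
        rcases hj with hj | hj <;> rw [mem_exAd] at hj <;>
          rcases hj with h' | ⟨-, h' | h'⟩ | ⟨k, -, -, h'⟩ <;> simp_all
      · intro j hj
        rcases hj with hj | hj <;> rw [mem_exAd] at hj <;>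
          rcases hj with h' | ⟨-, h' | h'⟩ | ⟨k, -, -, h'⟩ <;> simp_all <;> omega
      · intro j hj
        rw [mem_exAd] at hj
        rcases hj with h' | ⟨-, h' | h'⟩ | ⟨k, -, -, h'⟩ <;> simp_all
    · refine Or.inr ⟨i, i, le_refl i, h2, usedA_Ae n i h1 h2, ?_, ?_, ?_⟩
      · intro j hj
        rcases hj with hj | hj <;> rw [mem_exAe] at hj <;>
          rcases hj with h' | ⟨-, h' | h'⟩ | ⟨k, -, -, h'⟩ <;> simp_all
      · intro j hj
        rcases hj with hj | hj <;> rw [mem_exAe] at hj <;>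
          rcases hj with h' | ⟨-, h' | h'⟩ | ⟨k, -, -, h'⟩ <;> simp_all <;> omega
      · intro j hj
        rw [mem_exAe] at hj
        rcases hj with h' | ⟨-, h' | h'⟩ | ⟨k, -, -, h'⟩ <;> simp_all
    · refine Or.inl ⟨usedA_B n i, ?_, ?_⟩
      · intro l hl
        rw [mem_exB] at hl
        rcases hl with h' | ⟨k, -, -, h'⟩ <;> subst h' <;> exact ⟨_, rfl⟩
      · intro j k hj hk
        rw [mem_exB] at hj hk
        rcases hj with h' | ⟨k', -, -, h'⟩ <;> rcases hk with h'' | ⟨k'', -, -, h''⟩ <;>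
          simp_all
  | res hC hD hvC hvD ihC ihD =>
    rename_i Cl Dl Ul Vl v
    rw [usedA_union]
    rcases ihC with ⟨hUC, hFC, huC⟩ | ⟨a1, b1, hab1, hb1, hU1, hP1, hN1, hF1⟩
    · -- Cl is purely B-derived; pivot must be an f-variable
      obtain ⟨m, hm⟩ := hFC _ hvC
      obtain rfl : v = EVar.f m := hm
      rcases ihD with ⟨hUD, hFD, huD⟩ | ⟨a2, b2, hab2, hb2, hU2, hP2, hN2, hF2⟩
      · refine Or.inl ⟨by rw [hUC, hUD]; simp, ?_, ?_⟩
        · intro l hl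
          rcases mem_resolvent.1 hl with ⟨h, -⟩ | ⟨h, -⟩
          exacts [hFC _ h, hFD _ h]
        · intro j k hj hk
          have key : ∀ j, (EVar.f j, true) ∈ resolventOn Cl Dl (EVar.f m) →
              (EVar.f j, true) ∈ Dl := by
            intro j' hj'
            rcases mem_resolvent.1 hj' with ⟨h, hne⟩ | ⟨h, -⟩
            · exact absurd (congrArg (fun x => (EVar.f x, true)) (huC _ _ h hvC)) hne
            · exact h
          exact huD _ _ (key _ hj) (key _ hk)
      · refine Or.inr ⟨a2, b2, hab2, hb2, by rw [hUC, hU2]; simp, ?_, ?_, ?_⟩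
        · intro j hj
          have : (EVar.d j, true) ∈ Dl ∨ (EVar.e j, true) ∈ Dl := by
            rcases hj with hj | hj <;> rcases mem_resolvent.1 hj with ⟨h, -⟩ | ⟨h, -⟩
            · obtain ⟨k, hk⟩ := hFC _ h; exact absurd hk (by simp)
            · exact Or.inl h
            · obtain ⟨k, hk⟩ := hFC _ h; exact absurd hk (by simp)
            · exact Or.inr h
          exact hP2 _ this
        · intro j hj
          have : (EVar.d j, false) ∈ Dl ∨ (EVar.e j, false) ∈ Dl := by
            rcases hj with hj | hj <;> rcases mem_resolvent.1 hj with ⟨h, -⟩ | ⟨h, -⟩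
            · obtain ⟨k, hk⟩ := hFC _ h; exact absurd hk (by simp)
            · exact Or.inl h
            · obtain ⟨k, hk⟩ := hFC _ h; exact absurd hk (by simp)
            · exact Or.inr h
          exact hN2 _ this
        · intro j hj
          rcases mem_resolvent.1 hj with ⟨h, hne⟩ | ⟨h, -⟩
          · exact absurd (congrArg (fun x => (EVar.f x, true)) (huC _ _ h hvC)) hne
          · exact hF2 _ h
    · -- Cl has interval [a1, b1]; pivot cannot be f
      cases v with
      | f m => exact absurd hvC (hF1 m)
      | d m =>
        rcases ihD with ⟨hUD, hFD, huD⟩ | ⟨a2, b2, hab2, hb2, hU2, hP2, hN2, hF2⟩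
        · obtain ⟨k, hk⟩ := hFD _ hvD; exact absurd hk (by simp)
        · obtain ⟨hm1, hm2⟩ := hP1 m (Or.inl hvC)
          obtain ⟨hm3, hm4⟩ := hN2 m (Or.inl hvD)
          refine Or.inr ⟨min a1 a2, max b1 b2, by omega, by omega, ?_, ?_, ?_, ?_⟩
          · rw [hU1, hU2]; ext x; simp only [Set.mem_union, Set.mem_Icc]; omega
          · intro j hj
            have : ((EVar.d j, true) ∈ Cl ∨ (EVar.e j, true) ∈ Cl) ∨
                ((EVar.d j, true) ∈ Dl ∨ (EVar.e j, true) ∈ Dl) := by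
              rcases hj with hj | hj <;> rcases mem_resolvent.1 hj with ⟨h, -⟩ | ⟨h, -⟩ <;>
                tauto
            rcases this with h | h
            · have := hP1 _ h; omega
            · have := hP2 _ h; omega
          · intro j hj
            have : ((EVar.d j, false) ∈ Cl ∨ (EVar.e j, false) ∈ Cl) ∨
                ((EVar.d j, false) ∈ Dl ∨ (EVar.e j, false) ∈ Dl) := by
              rcases hj with hj | hj <;> rcases mem_resolvent.1 hj with ⟨h, -⟩ | ⟨h, -⟩ <;>
                tauto
            rcases this with h | h
            · have := hN1 _ h; omega
            · have := hN2 _ h; omega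
          · intro j hj
            rcases mem_resolvent.1 hj with ⟨h, -⟩ | ⟨h, -⟩
            exacts [hF1 _ h, hF2 _ h]
      | e m =>
        rcases ihD with ⟨hUD, hFD, huD⟩ | ⟨a2, b2, hab2, hb2, hU2, hP2, hN2, hF2⟩
        · obtain ⟨k, hk⟩ := hFD _ hvD; exact absurd hk (by simp)
        · obtain ⟨hm1, hm2⟩ := hP1 m (Or.inr hvC)
          obtain ⟨hm3, hm4⟩ := hN2 m (Or.inr hvD)
          refine Or.inr ⟨min a1 a2, max b1 b2, by omega, by omega, ?_, ?_, ?_, ?_⟩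
          · rw [hU1, hU2]; ext x; simp only [Set.mem_union, Set.mem_Icc]; omega
          · intro j hj
            have : ((EVar.d j, true) ∈ Cl ∨ (EVar.e j, true) ∈ Cl) ∨
                ((EVar.d j, true) ∈ Dl ∨ (EVar.e j, true) ∈ Dl) := by
              rcases hj with hj | hj <;> rcases mem_resolvent.1 hj with ⟨h, -⟩ | ⟨h, -⟩ <;>
                tauto
            rcases this with h | h
            · have := hP1 _ h; omega
            · have := hP2 _ h; omega
          · intro j hj
            have : ((EVar.d j, false) ∈ Cl ∨ (EVar.e j, false) ∈ Cl) ∨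
                ((EVar.d j, false) ∈ Dl ∨ (EVar.e j, false) ∈ Dl) := by
              rcases hj with hj | hj <;> rcases mem_resolvent.1 hj with ⟨h, -⟩ | ⟨h, -⟩ <;>
                tauto
            rcases this with h | h
            · have := hN1 _ h; omega
            · have := hN2 _ h; omega
          · intro j hj
            rcases mem_resolvent.1 hj with ⟨h, -⟩ | ⟨h, -⟩
            exacts [hF1 _ h, hF2 _ h]


/-- If C is derivable by resolution from the existential parts of the clauses
of KBKF-lq[n] and the derivation uses at least one A-clause, then the set of
indices i ∈ [0,n] of A-clauses appearing as leaves of the derivation is a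
nonempty interval [a,b]. -/
theorem KBKF_used_A_indices_interval (n : ℕ) (C : EClause) (U : Set EClause)
    (hder : ResDeriv (exAxioms n) C U)
    (hA : (usedAIndices n U).Nonempty) :
    ∃ a b, a ≤ b ∧ b ≤ n ∧ usedAIndices n U = Set.Icc a b := by
  rcases main_invariant n C U hder with ⟨hU, -⟩ | ⟨a, b, h1, h2, h3, -⟩
  · rw [hU] at hA; exact absurd hA Set.not_nonempty_empty
  · exact ⟨a, b, h1, h2, h3⟩
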